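/- arXiv:1503.05390 — 2 statements merged into one kernel-verified Lean document; each statement's English description precedes it below -/
import Mathlib

section
/- Let a > 0, let H : [a,∞) → ℝ be strictly increasing, bounded and non-negative, and let G₁, G₂ : [a,∞) → ℝ be continuous functions of bounded variation on [a,∞) with lim_{x→∞} G₁(x) = lim_{x→∞} G₂(x) = 0. If G₁(x) < G₂(x) for all x ≥ a, then ∫_a^∞ H(x) d[−G₁(x)] < ∫_a^∞ H(x) d[−G₂(x)], where the integrals are improper Riemann–Stieltjes integrals. -/
open Set Filter

noncomputable section

/-- The Riemann–Stieltjes sum of `f` with respect to `g` for the tagged partition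
given by points `t 0, t 1, ..., t n` with tags `ξ 0, ..., ξ (n-1)`. -/
def rsSum (f g : ℝ → ℝ) (n : ℕ) (t ξ : ℕ → ℝ) : ℝ :=
  ∑ i ∈ Finset.range n, f (ξ i) * (g (t (i + 1)) - g (t i))

/-- `IsRSIntegral f g a b I` says that the Riemann–Stieltjes integral
`∫_a^b f(x) dg(x)` exists and equals `I`: for every `ε > 0` there is `δ > 0` such
that every tagged partition of `[a, b]` of mesh `< δ` has Riemann–Stieltjes sum
within `ε` of `I`. -/
def IsRSIntegral (f g : ℝ → ℝ) (a b I : ℝ) : Prop :=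
  ∀ ε > 0, ∃ δ > 0, ∀ (n : ℕ) (t ξ : ℕ → ℝ),
    t 0 = a → t n = b →
    (∀ i < n, t i ≤ t (i + 1)) →
    (∀ i < n, ξ i ∈ Set.Icc (t i) (t (i + 1))) →
    (∀ i < n, t (i + 1) - t i < δ) →
    |rsSum f g n t ξ - I| < ε

/-- `IsImproperRSIntegral f g a I` says that the improper Riemann–Stieltjes integral
`∫_a^∞ f(x) dg(x) = lim_{b→∞} ∫_a^b f(x) dg(x)` exists and equals `I`. -/
def IsImproperRSIntegral (f g : ℝ → ℝ) (a I : ℝ) : Prop :=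
  ∃ F : ℝ → ℝ, (∀ b, a < b → IsRSIntegral f g a b (F b)) ∧
    Filter.Tendsto F Filter.atTop (nhds I)

/-!
Subtracting the two integrals, `I₂ - I₁` is the integral of `H` against `-D` with
`D = G₂ - G₁ > 0` and `D → 0`. Summation by parts turns a Riemann–Stieltjes sum with
left-endpoint tags into `H(a) D(a) - H(t_{n-1}) D(b) + ∑ (H(t_{i+1}) - H(t_i)) D(t_{i+1})`.
The first term is nonnegative, the second is at most `M D(b) → 0` for an upper bound `M` of `H`,
and the terms of the last sum are nonnegative, those with `t_{i+1} ≤ a + 1` telescoping to at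
least `m (H(a + 1/2) - H(a)) > 0`, where `m > 0` is the minimum of the continuous function `D`
on `[a, a + 1]`.
-/

open Finset in
theorem sum_mul_sub_succ_eq {R : Type*} [CommRing R] (h d : ℕ → R) (k : ℕ) :
    ∑ i ∈ range (k + 1), h i * (d i - d (i + 1)) =
      h 0 * d 0 - h k * d (k + 1) + ∑ i ∈ range k, (h (i + 1) - h i) * d (i + 1) := by
  induction k with
  | zero => simp [mul_sub]
  | succ k ih => rw [sum_range_succ, ih, sum_range_succ]; ring

open Finset in
theorem mul_sub_le_sum_sub_mul {h d : ℕ → ℝ} {m : ℝ} {K k : ℕ} (hKk : K ≤ k)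
    (hh : ∀ i < k, h i ≤ h (i + 1)) (hd : ∀ i < k, 0 ≤ d (i + 1))
    (hmd : ∀ i < K, m ≤ d (i + 1)) :
    m * (h K - h 0) ≤ ∑ i ∈ range k, (h (i + 1) - h i) * d (i + 1) :=
  calc m * (h K - h 0) = ∑ i ∈ range K, (h (i + 1) - h i) * m := by
        rw [← sum_mul, sum_range_sub, mul_comm]
    _ ≤ ∑ i ∈ range K, (h (i + 1) - h i) * d (i + 1) :=
        sum_le_sum fun i hi => mul_le_mul_of_nonneg_left (hmd i (mem_range.1 hi))
          (sub_nonneg.2 (hh i ((mem_range.1 hi).trans_le hKk)))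
    _ ≤ ∑ i ∈ range k, (h (i + 1) - h i) * d (i + 1) :=
        sum_le_sum_of_subset_of_nonneg (range_subset_range.2 hKk) fun i hi _ =>
          mul_nonneg (sub_nonneg.2 (hh i (mem_range.1 hi))) (hd i (mem_range.1 hi))

theorem exists_partition_point_mem_Ico {t : ℕ → ℝ} {n : ℕ} {x δ : ℝ} (hδ : 0 < δ)
    (h0 : t 0 < x) (hn : x + δ ≤ t n) (hmesh : ∀ i < n, t (i + 1) - t i < δ) :
    ∃ K, 0 < K ∧ K < n ∧ x ≤ t K ∧ t K < x + δ := by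
  classical
  have hex : ∃ j, x ≤ t j := ⟨n, by linarith⟩
  have hxK : x ≤ t (Nat.find hex) := Nat.find_spec hex
  have hK0 : 0 < Nat.find hex := Nat.pos_of_ne_zero fun h => by rw [h] at hxK; linarith
  have hKn : Nat.find hex ≤ n := Nat.find_min' hex (by linarith)
  have hprev : t (Nat.find hex - 1) < x := not_le.1 (Nat.find_min hex (by omega))
  have hstep : t (Nat.find hex) - t (Nat.find hex - 1) < δ := by
    simpa [Nat.sub_add_cancel hK0] using hmesh (Nat.find hex - 1) (by omega)
  have hKx : t (Nat.find hex) < x + δ := by linarith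
  exact ⟨Nat.find hex, hK0, hKn.lt_of_ne fun h => by rw [h] at hKx; linarith, hxK, hKx⟩

theorem exists_partition_mesh_lt {a b δ : ℝ} (hab : a ≤ b) (hδ : 0 < δ) :
    ∃ (n : ℕ) (t : ℕ → ℝ), t 0 = a ∧ t n = b ∧ (∀ i < n, t i ≤ t (i + 1)) ∧
      ∀ i < n, t (i + 1) - t i < δ := by
  obtain ⟨n, hn⟩ := exists_nat_gt ((b - a) / δ)
  have hn0 : (0 : ℝ) < n := lt_of_le_of_lt (div_nonneg (sub_nonneg.2 hab) hδ.le) hn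
  have hstep : ∀ i : ℕ, a + (i + 1 : ℕ) * ((b - a) / n) - (a + i * ((b - a) / n)) =
      (b - a) / n := fun i => by push_cast; ring
  refine ⟨n, fun i => a + i * ((b - a) / n), by simp, by field_simp; ring,
    fun i _ => ?_, fun i _ => ?_⟩
  · have := div_nonneg (sub_nonneg.2 hab) hn0.le
    linarith [hstep i]
  · rw [hstep, div_lt_iff₀ hn0]
    rwa [div_lt_iff₀ hδ, mul_comm] at hn

theorem rsSum_sub (f g₁ g₂ : ℝ → ℝ) (n : ℕ) (t ξ : ℕ → ℝ) :
    rsSum f (fun x => g₁ x - g₂ x) n t ξ = rsSum f g₁ n t ξ - rsSum f g₂ n t ξ := by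
  simp only [rsSum, ← Finset.sum_sub_distrib]
  exact Finset.sum_congr rfl fun i _ => by ring

theorem IsRSIntegral.sub {f g₁ g₂ : ℝ → ℝ} {a b I₁ I₂ : ℝ} (h₁ : IsRSIntegral f g₁ a b I₁)
    (h₂ : IsRSIntegral f g₂ a b I₂) : IsRSIntegral f (fun x => g₁ x - g₂ x) a b (I₁ - I₂) := by
  intro ε hε
  obtain ⟨δ₁, hδ₁, hS₁⟩ := h₁ (ε / 2) (half_pos hε)
  obtain ⟨δ₂, hδ₂, hS₂⟩ := h₂ (ε / 2) (half_pos hε)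
  refine ⟨min δ₁ δ₂, lt_min hδ₁ hδ₂, fun n t ξ ht0 htn hstep hξ hmesh => ?_⟩
  have e₁ := hS₁ n t ξ ht0 htn hstep hξ fun i hi => (hmesh i hi).trans_le (min_le_left _ _)
  have e₂ := hS₂ n t ξ ht0 htn hstep hξ fun i hi => (hmesh i hi).trans_le (min_le_right _ _)
  rw [rsSum_sub]
  calc |rsSum f g₁ n t ξ - rsSum f g₂ n t ξ - (I₁ - I₂)|
      = |(rsSum f g₁ n t ξ - I₁) - (rsSum f g₂ n t ξ - I₂)| := by ring_nf
    _ ≤ |rsSum f g₁ n t ξ - I₁| + |rsSum f g₂ n t ξ - I₂| := abs_sub _ _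
    _ < ε := by linarith

theorem IsRSIntegral.le_of_forall_le_rsSum {f g : ℝ → ℝ} {a b I c η : ℝ}
    (hI : IsRSIntegral f g a b I) (hab : a ≤ b) (hη : 0 < η)
    (hc : ∀ (n : ℕ) (t : ℕ → ℝ), t 0 = a → t n = b → (∀ i < n, t i ≤ t (i + 1)) →
      (∀ i < n, t (i + 1) - t i < η) → c ≤ rsSum f g n t t) :
    c ≤ I := by
  refine le_of_forall_pos_lt_add fun ε hε => ?_
  obtain ⟨δ, hδ, hS⟩ := hI ε hε
  obtain ⟨n, t, ht0, htn, hstep, hmesh⟩ := exists_partition_mesh_lt hab (lt_min hδ hη)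
  have hclose := hS n t t ht0 htn hstep (fun i hi => ⟨le_rfl, hstep i hi⟩)
    fun i hi => (hmesh i hi).trans_le (min_le_left _ _)
  have hle := hc n t ht0 htn hstep fun i hi => (hmesh i hi).trans_le (min_le_right _ _)
  linarith [(abs_lt.1 hclose).2]

theorem sub_le_rsSum_neg {H D : ℝ → ℝ} {a x b m M δ : ℝ} (hx : a < x) (hb : x + δ ≤ b)
    (hδ : 0 < δ) (hH : MonotoneOn H (Ici a)) (hHa : 0 ≤ H a)
    (hHM : ∀ y ∈ Icc a b, H y ≤ M) (hD : ∀ y ∈ Icc a b, 0 ≤ D y) (hm : 0 ≤ m)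
    (hmD : ∀ y ∈ Icc a (x + δ), m ≤ D y) {n : ℕ} {t : ℕ → ℝ} (ht0 : t 0 = a)
    (htn : t n = b) (hstep : ∀ i < n, t i ≤ t (i + 1))
    (hmesh : ∀ i < n, t (i + 1) - t i < δ) :
    m * (H x - H a) - M * D b ≤ rsSum H (fun y => -D y) n t t := by
  have hmono : MonotoneOn t (Iic n) :=
    monotoneOn_of_le_add_one ordConnected_Iic fun i _ _ hi => hstep i hi
  have ht : ∀ i ≤ n, t i ∈ Icc a b := fun i hi =>
    ⟨ht0 ▸ hmono (Nat.zero_le n) hi (Nat.zero_le i), htn ▸ hmono hi (le_refl n) hi⟩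
  obtain ⟨K, hK0, hKn, hxK, hKx⟩ :=
    exists_partition_point_mem_Ico hδ (ht0 ▸ hx) (htn ▸ hb) hmesh
  obtain ⟨k, rfl⟩ : ∃ k, n = k + 1 := ⟨n - 1, by omega⟩
  have hsum : rsSum H (fun y => -D y) (k + 1) t t = H a * D a - H (t k) * D b +
      ∑ i ∈ Finset.range k, (H (t (i + 1)) - H (t i)) * D (t (i + 1)) := by
    simp only [rsSum, neg_sub_neg, ← ht0, ← htn]
    exact sum_mul_sub_succ_eq (fun i => H (t i)) (fun i => D (t i)) k
  have hbulk : m * (H (t K) - H (t 0)) ≤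
      ∑ i ∈ Finset.range k, (H (t (i + 1)) - H (t i)) * D (t (i + 1)) :=
    mul_sub_le_sum_sub_mul (h := fun i => H (t i)) (d := fun i => D (t i)) (by omega)
      (fun i hi => hH (ht i (by omega)).1 (ht (i + 1) (by omega)).1 (hstep i (by omega)))
      (fun i hi => hD _ (ht (i + 1) (by omega)))
      fun i hi => hmD _ ⟨(ht (i + 1) (by omega)).1, (hmono (mem_Iic.2 (by omega))
        (mem_Iic.2 hKn.le) (by omega : i + 1 ≤ K)).trans hKx.le⟩
  have hHx : H x ≤ H (t K) := hH (mem_Ici.2 hx.le) (ht K (by omega)).1 hxK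
  have hfirst : 0 ≤ H a * D a := mul_nonneg hHa (hD a (ht0 ▸ ht 0 (Nat.zero_le _)))
  have hlast : H (t k) * D b ≤ M * D b :=
    mul_le_mul_of_nonneg_right (hHM _ (ht k (by omega))) (hD b (htn ▸ ht _ le_rfl))
  rw [ht0] at hbulk
  rw [hsum]
  linarith [mul_le_mul_of_nonneg_left (sub_le_sub_right hHx (H a)) hm]

theorem rs_improper_monotone_strict_increasing_general
    (a : ℝ)
    (H G₁ G₂ : ℝ → ℝ) (I₁ I₂ : ℝ)
    (hH_mono : StrictMonoOn H (Set.Ici a))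
    (hH_bdd : ∃ M, ∀ x ∈ Set.Ici a, |H x| ≤ M)
    (hH_nonneg : ∀ x ∈ Set.Ici a, 0 ≤ H x)
    (hG₁_cont : ContinuousOn G₁ (Set.Ici a))
    (hG₂_cont : ContinuousOn G₂ (Set.Ici a))
    (hG₁_lim : Filter.Tendsto G₁ Filter.atTop (nhds 0))
    (hG₂_lim : Filter.Tendsto G₂ Filter.atTop (nhds 0))
    (hlt : ∀ x ∈ Set.Ici a, G₁ x < G₂ x)
    (hI₁ : IsImproperRSIntegral H (fun x => -G₁ x) a I₁)
    (hI₂ : IsImproperRSIntegral H (fun x => -G₂ x) a I₂) :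
    I₁ < I₂ := by
  obtain ⟨M, hM⟩ := hH_bdd
  obtain ⟨F₁, hF₁, hF₁_lim⟩ := hI₁
  obtain ⟨F₂, hF₂, hF₂_lim⟩ := hI₂
  set D := fun x => G₂ x - G₁ x
  have hD_pos : ∀ x ∈ Ici a, 0 < D x := fun x hx => sub_pos.2 (hlt x hx)
  obtain ⟨x₀, hx₀, hmin⟩ := isCompact_Icc.exists_isMinOn (nonempty_Icc.2 (by linarith))
    ((hG₂_cont.sub hG₁_cont).mono (Icc_subset_Ici_self : Icc a (a + 1) ⊆ Ici a))
  set c := D x₀ * (H (a + 1 / 2) - H a)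
  have hc : 0 < c := mul_pos (hD_pos x₀ hx₀.1)
    (sub_pos.2 (hH_mono self_mem_Ici (mem_Ici.2 (by linarith)) (by linarith)))
  have hF : ∀ b ≥ a + 1, c - M * D b ≤ F₂ b - F₁ b := fun b hb => by
    have hint : IsRSIntegral H (fun x => -D x) a b (F₂ b - F₁ b) := by
      convert (hF₂ b (by linarith)).sub (hF₁ b (by linarith)) using 2
      ring
    refine hint.le_of_forall_le_rsSum (by linarith) one_half_pos fun n t ht0 htn hstep hmesh =>
      sub_le_rsSum_neg (by linarith) (by linarith) one_half_pos hH_mono.monotoneOn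
        (hH_nonneg a self_mem_Ici) (fun y hy => (abs_le.1 (hM y hy.1)).2)
        (fun y hy => (hD_pos y hy.1).le) (hD_pos x₀ hx₀.1).le
        (fun y hy => hmin ⟨hy.1, by linarith [hy.2]⟩) ht0 htn hstep hmesh
  have hlim : Tendsto (fun b => c - M * D b) atTop (nhds c) := by
    simpa using tendsto_const_nhds.sub ((hG₂_lim.sub hG₁_lim).const_mul M)
  have hgap : c ≤ I₂ - I₁ := le_of_tendsto_of_tendsto hlim (hF₂_lim.sub hF₁_lim)
    ((eventually_ge_atTop (a + 1)).mono hF)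
  linarith

/-- If `a > 0`, `H` is strictly increasing, bounded and non-negative on
`[a,∞)`, `G₁, G₂` are continuous, of bounded variation on `[a,∞)` and tend to `0` at `∞`,
and `G₁ < G₂` on `[a,∞)`, then `∫_a^∞ H(x) d[-G₁(x)] < ∫_a^∞ H(x) d[-G₂(x)]`. -/
theorem rs_improper_monotone_strict_increasing
    (a : ℝ) (ha : 0 < a)
    (H G₁ G₂ : ℝ → ℝ) (I₁ I₂ : ℝ)
    (hH_mono : StrictMonoOn H (Set.Ici a))
    (hH_bdd : ∃ M, ∀ x ∈ Set.Ici a, |H x| ≤ M)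
    (hH_nonneg : ∀ x ∈ Set.Ici a, 0 ≤ H x)
    (hG₁_cont : ContinuousOn G₁ (Set.Ici a))
    (hG₁_bv : BoundedVariationOn G₁ (Set.Ici a))
    (hG₂_cont : ContinuousOn G₂ (Set.Ici a))
    (hG₂_bv : BoundedVariationOn G₂ (Set.Ici a))
    (hG₁_lim : Filter.Tendsto G₁ Filter.atTop (nhds 0))
    (hG₂_lim : Filter.Tendsto G₂ Filter.atTop (nhds 0))
    (hlt : ∀ x ∈ Set.Ici a, G₁ x < G₂ x)
    (hI₁ : IsImproperRSIntegral H (fun x => -G₁ x) a I₁)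
    (hI₂ : IsImproperRSIntegral H (fun x => -G₂ x) a I₂) :
    I₁ < I₂ :=
  rs_improper_monotone_strict_increasing_general a H G₁ G₂ I₁ I₂ hH_mono hH_bdd hH_nonneg hG₁_cont
    hG₂_cont hG₁_lim hG₂_lim hlt hI₁ hI₂
end
end

section
/- Let h : (0,∞) → ℝ be positive, non-decreasing and bounded, let u₁ be fixed, and let f₁, f₂ : (0,∞) → ℝ be measurable, non-negative, locally integrable functions with ∫_0^∞ f₁(y) dy = ∫_0^∞ f₂(y) dy = ∞ and f₁ ≤ f₂ pointwise. Then ∫_0^∞ h(x) f₁(x) exp(−∫_0^x f₁(y) dy) dx ≥ ∫_0^∞ h(x) f₂(x) exp(−∫_0^x f₂(y) dy) dx; that is, for fixed first factor h, the map f ↦ ∫_0^∞ h(x) f(x) exp(−∫_0^x f(y) dy) dx is non-increasing in f on non-negative locally integrable functions with divergent integral. -/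
/-!
Write `F(x) = ∫₀ˣ f` and let `ν_f` be the measure with density `f e^{-F}` on `(0, ∞)`, so that the
functional is `∫ h dν_f`. Since `F` is absolutely continuous, `ν_f (c, b) = e^{-F(c)} - e^{-F(b)}`,
hence `ν_f (c, ∞) ≤ e^{-F(c)}`, with equality when `F → ∞`. A superlevel set `{h > t}` of the
non-decreasing `h` is, up to the point `c = inf {h > t}`, the tail `(c, ∞)`, so `f₁ ≤ f₂` gives
`ν_{f₂} {h > t} ≤ e^{-F₂(c)} ≤ e^{-F₁(c)} = ν_{f₁} {h > t}`, and the layer-cake formula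
integrates this over `t`.
-/

open Set Filter MeasureTheory Topology

theorem LipschitzOnWith.comp_absolutelyContinuousOnInterval {X Y : Type*} [PseudoMetricSpace X]
    [PseudoMetricSpace Y] {g : X → Y} {Φ : ℝ → X} {K : NNReal} {s : Set X} {a b : ℝ}
    (hg : LipschitzOnWith K g s) (hΦs : MapsTo Φ (uIcc a b) s)
    (hΦ : AbsolutelyContinuousOnInterval Φ a b) :
    AbsolutelyContinuousOnInterval (g ∘ Φ) a b := by
  have hKΦ := Tendsto.const_mul (K : ℝ) hΦ
  rw [mul_zero] at hKΦ
  refine squeeze_zero' (.of_forall fun _ ↦ Finset.sum_nonneg fun _ _ ↦ dist_nonneg) ?_ hKΦ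
  rw [eventually_inf_principal]
  filter_upwards with E hE
  rw [Finset.mul_sum]
  gcongr with i hi
  exact hg.dist_le_mul _ (hΦs (hE.1 i hi).1) _ (hΦs (hE.1 i hi).2)

theorem LocallyLipschitz.comp_absolutelyContinuousOnInterval {g Φ : ℝ → ℝ} {a b : ℝ}
    (hg : LocallyLipschitz g) (hΦ : AbsolutelyContinuousOnInterval Φ a b) :
    AbsolutelyContinuousOnInterval (g ∘ Φ) a b := by
  obtain ⟨K, hK⟩ := hg.locallyLipschitzOn.exists_lipschitzOnWith_of_compact
    (isCompact_uIcc.image_of_continuousOn hΦ.continuousOn)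
  exact hK.comp_absolutelyContinuousOnInterval (mapsTo_image _ _) hΦ

theorem AbsolutelyContinuousOnInterval.integral_deriv_comp_mul_deriv {g Φ : ℝ → ℝ} {a b : ℝ}
    (hg : ContDiff ℝ 1 g) (hΦ : AbsolutelyContinuousOnInterval Φ a b) :
    ∫ x in a..b, deriv g (Φ x) * deriv Φ x = g (Φ b) - g (Φ a) := by
  have hFTC := (hg.locallyLipschitz.comp_absolutelyContinuousOnInterval hΦ).integral_deriv_eq_sub
  rw [Function.comp_apply, Function.comp_apply] at hFTC
  rw [← hFTC]
  refine intervalIntegral.integral_congr_ae ?_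
  filter_upwards [hΦ.ae_differentiableAt] with x hΦx hx
  have hgΦx := (hg.differentiable one_ne_zero (Φ x)).hasDerivAt
  exact (hgΦx.comp x (hΦx (uIoc_subset_uIcc hx)).hasDerivAt).deriv.symm

theorem intervalIntegral.integral_mul_exp_neg_integral {f : ℝ → ℝ} {a b c : ℝ}
    (hf : IntervalIntegrable f volume c b) (ha : a ∈ uIcc c b) :
    ∫ x in a..b, f x * Real.exp (-∫ y in c..x, f y) =
      Real.exp (-∫ y in c..a, f y) - Real.exp (-∫ y in c..b, f y) := by
  have hΦ := (hf.absolutelyContinuousOnInterval_intervalIntegral left_mem_uIcc).mono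
    (uIcc_subset_uIcc ha right_mem_uIcc)
  have hg : ContDiff ℝ 1 fun u ↦ -Real.exp (-u) := by fun_prop
  have hg' (u : ℝ) : deriv (fun u ↦ -Real.exp (-u)) u = Real.exp (-u) := by
    simpa using ((hasDerivAt_neg u).exp.neg).deriv
  have hcov := hΦ.integral_deriv_comp_mul_deriv hg
  simp only [hg'] at hcov
  rw [← neg_sub_neg, ← hcov]
  refine integral_congr_ae ?_
  filter_upwards [hf.ae_hasDerivAt_integral] with x hx hxab
  rw [(hx (uIcc_subset_uIcc ha right_mem_uIcc (uIoc_subset_uIcc hxab)) c left_mem_uIcc).deriv,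
    mul_comm]

theorem IsUpperSet.measure_eq_measure_Ioi_sInf {α : Type*} [ConditionallyCompleteLinearOrder α]
    [MeasurableSpace α] {μ : Measure α} [NullSingletonClass μ] {S : Set α} (hS : IsUpperSet S)
    (hne : S.Nonempty) (hbdd : BddBelow S) : μ S = μ (Ioi (sInf S)) := by
  refine le_antisymm ?_ (measure_mono fun y hy ↦ ?_)
  · calc μ S ≤ μ (Ici (sInf S)) := measure_mono fun x hx ↦ csInf_le hbdd hx
      _ = μ (Ioi (sInf S)) := measure_congr Ioi_ae_eq_Ici.symm
  · obtain ⟨x, hxS, hxy⟩ := exists_lt_of_csInf_lt hne hy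
    exact hS hxy.le hxS

theorem lintegral_ofReal_le_lintegral_ofReal_of_meas_lt_le {α : Type*} [MeasurableSpace α]
    {μ ν : Measure α} {g : α → ℝ} (hμ : 0 ≤ᵐ[μ] g) (hν : 0 ≤ᵐ[ν] g) (hgμ : AEMeasurable g μ)
    (hgν : AEMeasurable g ν) (hle : ∀ t > 0, μ {x | t < g x} ≤ ν {x | t < g x}) :
    ∫⁻ x, ENNReal.ofReal (g x) ∂μ ≤ ∫⁻ x, ENNReal.ofReal (g x) ∂ν := by
  rw [lintegral_eq_lintegral_meas_lt μ hμ hgμ, lintegral_eq_lintegral_meas_lt ν hν hgν]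
  exact setLIntegral_mono' measurableSet_Ioi hle

noncomputable def cumHazard (f : ℝ → ℝ) (x : ℝ) : ℝ := ∫ y in Ioo 0 x, f y

theorem cumHazard_eq_intervalIntegral (f : ℝ → ℝ) {x : ℝ} (hx : 0 ≤ x) :
    cumHazard f x = ∫ y in 0..x, f y := by
  rw [intervalIntegral.integral_of_le hx, integral_Ioc_eq_integral_Ioo, cumHazard]

theorem integral_Ioo_mul_exp_neg_cumHazard {f : ℝ → ℝ} {b c : ℝ} (hc : 0 ≤ c) (hcb : c ≤ b)
    (hf : IntegrableOn f (Ioo 0 b)) :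
    ∫ x in Ioo c b, f x * Real.exp (-cumHazard f x) =
      Real.exp (-cumHazard f c) - Real.exp (-cumHazard f b) := by
  have hf' : IntervalIntegrable f volume 0 b :=
    (intervalIntegrable_iff_integrableOn_Ioo_of_le (hc.trans hcb)).2 hf
  rw [cumHazard_eq_intervalIntegral f hc, cumHazard_eq_intervalIntegral f (hc.trans hcb),
    ← intervalIntegral.integral_mul_exp_neg_integral hf' (Icc_subset_uIcc ⟨hc, hcb⟩),
    intervalIntegral.integral_of_le hcb, integral_Ioc_eq_integral_Ioo]
  refine setIntegral_congr_fun measurableSet_Ioo fun x hx ↦ ?_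
  rw [cumHazard_eq_intervalIntegral f (hc.trans hx.1.le)]

section cumHazard

variable {f : ℝ → ℝ}

theorem cumHazard_nonneg (hf₀ : ∀ x, 0 < x → 0 ≤ f x) (x : ℝ) : 0 ≤ cumHazard f x :=
  setIntegral_nonneg measurableSet_Ioo fun y hy ↦ hf₀ y hy.1

theorem monotone_cumHazard (hf₀ : ∀ x, 0 < x → 0 ≤ f x)
    (hf : ∀ x, 0 < x → IntegrableOn f (Ioo 0 x)) : Monotone (cumHazard f) := by
  intro a b hab
  rcases le_or_gt b 0 with hb | hb
  · simp [cumHazard, hb, hab.trans hb]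
  exact setIntegral_mono_set (hf b hb)
    ((ae_restrict_mem measurableSet_Ioo).mono fun y hy ↦ hf₀ y hy.1)
    (.of_forall (Ioo_subset_Ioo_right hab))

theorem cumHazard_le_cumHazard {g : ℝ → ℝ} (hf : ∀ x, 0 < x → IntegrableOn f (Ioo 0 x))
    (hg : ∀ x, 0 < x → IntegrableOn g (Ioo 0 x)) (hfg : ∀ x, 0 < x → f x ≤ g x) (x : ℝ) :
    cumHazard f x ≤ cumHazard g x := by
  rcases le_or_gt x 0 with hx | hx
  · simp [cumHazard, hx]
  exact setIntegral_mono_on (hf x hx) (hg x hx) measurableSet_Ioo fun y hy ↦ hfg y hy.1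

theorem integrableOn_mul_exp_neg_cumHazard (hf₀ : ∀ x, 0 < x → 0 ≤ f x)
    (hf : ∀ x, 0 < x → IntegrableOn f (Ioo 0 x)) {b : ℝ} (hb : 0 < b) :
    IntegrableOn (fun x ↦ f x * Real.exp (-cumHazard f x)) (Ioo 0 b) := by
  refine (hf b hb).mul_bdd (c := 1)
    (monotone_cumHazard hf₀ hf).measurable.neg.exp.aestronglyMeasurable (.of_forall fun x ↦ ?_)
  rw [Real.norm_of_nonneg (Real.exp_pos _).le, Real.exp_le_one_iff, neg_nonpos]
  exact cumHazard_nonneg hf₀ x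

end cumHazard

/-- The law on `(0, ∞)` of a lifetime with hazard rate `f`. -/
noncomputable def hazardMeasure (f : ℝ → ℝ) : Measure ℝ :=
  (volume.restrict (Ioi 0)).withDensity fun x ↦ ENNReal.ofReal (f x * Real.exp (-cumHazard f x))

instance (f : ℝ → ℝ) : NullSingletonClass (hazardMeasure f) := by
  rw [hazardMeasure]
  infer_instance

theorem hazardMeasure_inter_Ioi (f : ℝ → ℝ) (s : Set ℝ) :
    hazardMeasure f (s ∩ Ioi 0) = hazardMeasure f s := by
  rw [hazardMeasure, withDensity_apply', withDensity_apply',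
    Measure.restrict_restrict' measurableSet_Ioi, Measure.restrict_restrict' measurableSet_Ioi,
    inter_assoc, inter_self]

section hazardMeasure

variable {f : ℝ → ℝ}

theorem hazardMeasure_Ioo (hf₀ : ∀ x, 0 < x → 0 ≤ f x)
    (hf : ∀ x, 0 < x → IntegrableOn f (Ioo 0 x)) {b c : ℝ} (hc : 0 ≤ c) (hcb : c < b) :
    hazardMeasure f (Ioo c b) =
      ENNReal.ofReal (Real.exp (-cumHazard f c) - Real.exp (-cumHazard f b)) := by
  have hb : 0 < b := hc.trans_lt hcb
  rw [hazardMeasure, withDensity_apply _ measurableSet_Ioo,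
    Measure.restrict_restrict measurableSet_Ioo,
    inter_eq_left.2 (Ioo_subset_Ioi_self.trans (Ioi_subset_Ioi hc)),
    ← integral_Ioo_mul_exp_neg_cumHazard hc hcb.le (hf b hb),
    ofReal_integral_eq_lintegral_ofReal]
  · exact (integrableOn_mul_exp_neg_cumHazard hf₀ hf hb).mono_set (Ioo_subset_Ioo_left hc)
  · filter_upwards [ae_restrict_mem measurableSet_Ioo] with x hx
    exact mul_nonneg (hf₀ x (hc.trans_lt hx.1)) (Real.exp_pos _).le

theorem tendsto_hazardMeasure_Ioo (hf₀ : ∀ x, 0 < x → 0 ≤ f x)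
    (hf : ∀ x, 0 < x → IntegrableOn f (Ioo 0 x)) {c : ℝ} (hc : 0 ≤ c) :
    Tendsto (fun b ↦ ENNReal.ofReal (Real.exp (-cumHazard f c) - Real.exp (-cumHazard f b)))
      atTop (𝓝 (hazardMeasure f (Ioi c))) := by
  rw [← iUnion_Ioo_right c]
  refine (tendsto_measure_iUnion_atTop fun a b hab ↦ Ioo_subset_Ioo_right hab).congr' ?_
  filter_upwards [eventually_gt_atTop c] with b hb
  exact hazardMeasure_Ioo hf₀ hf hc hb

theorem hazardMeasure_Ioi_le (hf₀ : ∀ x, 0 < x → 0 ≤ f x)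
    (hf : ∀ x, 0 < x → IntegrableOn f (Ioo 0 x)) {c : ℝ} (hc : 0 ≤ c) :
    hazardMeasure f (Ioi c) ≤ ENNReal.ofReal (Real.exp (-cumHazard f c)) :=
  le_of_tendsto' (tendsto_hazardMeasure_Ioo hf₀ hf hc) fun _ ↦
    ENNReal.ofReal_le_ofReal (sub_le_self _ (Real.exp_pos _).le)

theorem hazardMeasure_Ioi (hf₀ : ∀ x, 0 < x → 0 ≤ f x)
    (hf : ∀ x, 0 < x → IntegrableOn f (Ioo 0 x)) (hdiv : Tendsto (cumHazard f) atTop atTop)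
    {c : ℝ} (hc : 0 ≤ c) :
    hazardMeasure f (Ioi c) = ENNReal.ofReal (Real.exp (-cumHazard f c)) := by
  refine tendsto_nhds_unique (tendsto_hazardMeasure_Ioo hf₀ hf hc) ?_
  have hexp := Real.tendsto_exp_atBot.comp (tendsto_neg_atTop_atBot.comp hdiv)
  simpa using (ENNReal.tendsto_ofReal (tendsto_const_nhds.sub hexp) :)

end hazardMeasure

section comparison

variable {f g : ℝ → ℝ}

theorem ae_hazardMeasure_pos : ∀ᵐ x ∂hazardMeasure f, 0 < x :=
  (withDensity_absolutelyContinuous _ _).ae_le (ae_restrict_mem measurableSet_Ioi)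

theorem lintegral_ofReal_hazardMeasure_lt_top (hf₀ : ∀ x, 0 < x → 0 ≤ f x)
    (hf : ∀ x, 0 < x → IntegrableOn f (Ioo 0 x)) {h : ℝ → ℝ} {M : ℝ}
    (hM : ∀ x, 0 < x → h x ≤ M) : ∫⁻ x, ENNReal.ofReal (h x) ∂hazardMeasure f < ⊤ := by
  have hfin : hazardMeasure f univ < ⊤ := by
    rw [← hazardMeasure_inter_Ioi, univ_inter]
    exact (hazardMeasure_Ioi_le hf₀ hf le_rfl).trans_lt ENNReal.ofReal_lt_top
  calc ∫⁻ x, ENNReal.ofReal (h x) ∂hazardMeasure f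
      ≤ ∫⁻ _, ENNReal.ofReal M ∂hazardMeasure f :=
        lintegral_mono_ae (ae_hazardMeasure_pos.mono fun x hx ↦ ENNReal.ofReal_le_ofReal (hM x hx))
    _ < ⊤ := by
      rw [lintegral_const]
      exact ENNReal.mul_lt_top ENNReal.ofReal_lt_top hfin

theorem setIntegral_Ioi_eq_toReal_lintegral_hazardMeasure (hfm : Measurable f)
    (hf₀ : ∀ x, 0 < x → 0 ≤ f x) (hf : ∀ x, 0 < x → IntegrableOn f (Ioo 0 x)) {h : ℝ → ℝ}
    (hhm : AEMeasurable h (volume.restrict (Ioi 0))) (hh₀ : ∀ x, 0 < x → 0 ≤ h x) :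
    ∫ x in Ioi 0, h x * f x * Real.exp (-cumHazard f x) =
      (∫⁻ x, ENNReal.ofReal (h x) ∂hazardMeasure f).toReal := by
  have hdens : Measurable fun x ↦ f x * Real.exp (-cumHazard f x) :=
    hfm.mul (monotone_cumHazard hf₀ hf).measurable.neg.exp
  rw [integral_eq_lintegral_of_nonneg_ae, hazardMeasure,
    lintegral_withDensity_eq_lintegral_mul₀ hdens.ennreal_ofReal.aemeasurable
      hhm.ennreal_ofReal]
  · congr 1
    refine setLIntegral_congr_fun measurableSet_Ioi fun x hx ↦ ?_
    rw [mul_assoc, ENNReal.ofReal_mul (hh₀ x hx), mul_comm, Pi.mul_apply]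
  · filter_upwards [ae_restrict_mem measurableSet_Ioi] with x hx
    exact mul_nonneg (mul_nonneg (hh₀ x hx) (hf₀ x hx)) (Real.exp_pos _).le
  · exact (hhm.mul hdens.aemeasurable).aestronglyMeasurable.congr
      (.of_forall fun x ↦ (mul_assoc _ _ _).symm)

theorem hazardMeasure_le_hazardMeasure_of_isUpperSet (hf₀ : ∀ x, 0 < x → 0 ≤ f x)
    (hf : ∀ x, 0 < x → IntegrableOn f (Ioo 0 x)) (hdiv : Tendsto (cumHazard f) atTop atTop)
    (hg₀ : ∀ x, 0 < x → 0 ≤ g x) (hg : ∀ x, 0 < x → IntegrableOn g (Ioo 0 x))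
    (hfg : ∀ x, 0 < x → f x ≤ g x) {S : Set ℝ} (hS : IsUpperSet S) (hS₀ : S ⊆ Ioi 0) :
    hazardMeasure g S ≤ hazardMeasure f S := by
  rcases S.eq_empty_or_nonempty with rfl | hne
  · simp
  have hbdd : BddBelow S := ⟨0, fun x hx ↦ (hS₀ hx).le⟩
  have hc : 0 ≤ sInf S := le_csInf hne fun x hx ↦ (hS₀ hx).le
  rw [hS.measure_eq_measure_Ioi_sInf hne hbdd, hS.measure_eq_measure_Ioi_sInf hne hbdd,
    hazardMeasure_Ioi hf₀ hf hdiv hc]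
  refine (hazardMeasure_Ioi_le hg₀ hg hc).trans (ENNReal.ofReal_le_ofReal ?_)
  exact Real.exp_le_exp.2 (neg_le_neg (cumHazard_le_cumHazard hf hg hfg _))

end comparison

theorem functional_I_antitone_pointwise_general
    (h f₁ f₂ : ℝ → ℝ)
    (hh_pos : ∀ x, 0 < x → 0 < h x)
    (hh_mono : MonotoneOn h (Set.Ioi 0))
    (hh_bdd : ∃ M, ∀ x, 0 < x → h x ≤ M)
    (hf₁_meas : Measurable f₁)
    (hf₂_meas : Measurable f₂)
    (hf₁_nonneg : ∀ x, 0 < x → 0 ≤ f₁ x)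
    (hf₂_nonneg : ∀ x, 0 < x → 0 ≤ f₂ x)
    (hf₁_loc : ∀ x, 0 < x → IntegrableOn f₁ (Set.Ioo 0 x))
    (hf₂_loc : ∀ x, 0 < x → IntegrableOn f₂ (Set.Ioo 0 x))
    (hf₁_div : Tendsto (fun x => ∫ y in Set.Ioo 0 x, f₁ y) atTop atTop)
    (hle : ∀ x, 0 < x → f₁ x ≤ f₂ x) :
    ∫ x in Set.Ioi 0, h x * f₂ x * Real.exp (-(∫ y in Set.Ioo 0 x, f₂ y)) ≤
      ∫ x in Set.Ioi 0, h x * f₁ x * Real.exp (-(∫ y in Set.Ioo 0 x, f₁ y)) := by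
  obtain ⟨M, hM⟩ := hh_bdd
  have hh₀ : ∀ x, 0 < x → 0 ≤ h x := fun x hx ↦ (hh_pos x hx).le
  have hhm : AEMeasurable h (volume.restrict (Ioi 0)) :=
    aemeasurable_restrict_of_monotoneOn measurableSet_Ioi hh_mono
  have hhm' {f : ℝ → ℝ} : AEMeasurable h (hazardMeasure f) :=
    hhm.mono_ac (withDensity_absolutelyContinuous _ _)
  have hh₀' {f : ℝ → ℝ} : 0 ≤ᵐ[hazardMeasure f] h :=
    ae_hazardMeasure_pos.mono fun x hx ↦ hh₀ x hx
  have htail (t : ℝ) : hazardMeasure f₂ {x | t < h x} ≤ hazardMeasure f₁ {x | t < h x} := by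
    have hupper : IsUpperSet ({x | t < h x} ∩ Ioi 0) := fun x y hxy hx ↦
      ⟨hx.1.trans_le (hh_mono hx.2 (hx.2.trans_le hxy) hxy), hx.2.trans_le hxy⟩
    rw [← hazardMeasure_inter_Ioi f₂, ← hazardMeasure_inter_Ioi f₁]
    exact hazardMeasure_le_hazardMeasure_of_isUpperSet hf₁_nonneg hf₁_loc hf₁_div hf₂_nonneg
      hf₂_loc hle hupper inter_subset_right
  calc ∫ x in Ioi 0, h x * f₂ x * Real.exp (-cumHazard f₂ x)
      = (∫⁻ x, ENNReal.ofReal (h x) ∂hazardMeasure f₂).toReal :=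
        setIntegral_Ioi_eq_toReal_lintegral_hazardMeasure hf₂_meas hf₂_nonneg hf₂_loc hhm hh₀
    _ ≤ (∫⁻ x, ENNReal.ofReal (h x) ∂hazardMeasure f₁).toReal :=
        ENNReal.toReal_mono (lintegral_ofReal_hazardMeasure_lt_top hf₁_nonneg hf₁_loc hM).ne
          (lintegral_ofReal_le_lintegral_ofReal_of_meas_lt_le hh₀' hh₀' hhm' hhm' fun t _ ↦ htail t)
    _ = ∫ x in Ioi 0, h x * f₁ x * Real.exp (-cumHazard f₁ x) :=
        (setIntegral_Ioi_eq_toReal_lintegral_hazardMeasure hf₁_meas hf₁_nonneg hf₁_loc hhm hh₀).symm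

/-- For a fixed positive, non-decreasing, bounded `h` on `(0,∞)`, the
map `f ↦ ∫_0^∞ h(x) f(x) exp(-∫_0^x f(y) dy) dx` is non-increasing in `f` on the class of
measurable, non-negative, locally integrable functions on `(0,∞)` with divergent
integral: if `f₁ ≤ f₂` pointwise on `(0,∞)`, then `I(f₁) ≥ I(f₂)`. -/
theorem functional_I_antitone_pointwise
    (h f₁ f₂ : ℝ → ℝ)
    (hh_pos : ∀ x, 0 < x → 0 < h x)
    (hh_mono : MonotoneOn h (Set.Ioi 0))
    (hh_bdd : ∃ M, ∀ x, 0 < x → h x ≤ M)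
    (hf₁_meas : Measurable f₁)
    (hf₂_meas : Measurable f₂)
    (hf₁_nonneg : ∀ x, 0 < x → 0 ≤ f₁ x)
    (hf₂_nonneg : ∀ x, 0 < x → 0 ≤ f₂ x)
    (hf₁_loc : ∀ x, 0 < x → IntegrableOn f₁ (Set.Ioo 0 x))
    (hf₂_loc : ∀ x, 0 < x → IntegrableOn f₂ (Set.Ioo 0 x))
    (hf₁_div : Tendsto (fun x => ∫ y in Set.Ioo 0 x, f₁ y) atTop atTop)
    (hf₂_div : Tendsto (fun x => ∫ y in Set.Ioo 0 x, f₂ y) atTop atTop)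
    (hle : ∀ x, 0 < x → f₁ x ≤ f₂ x) :
    ∫ x in Set.Ioi 0, h x * f₂ x * Real.exp (-(∫ y in Set.Ioo 0 x, f₂ y)) ≤
      ∫ x in Set.Ioi 0, h x * f₁ x * Real.exp (-(∫ y in Set.Ioo 0 x, f₁ y)) :=
  functional_I_antitone_pointwise_general h f₁ f₂ hh_pos hh_mono hh_bdd hf₁_meas hf₂_meas hf₁_nonneg
    hf₂_nonneg hf₁_loc hf₂_loc hf₁_div hle
end
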